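/- arXiv:1707.02251 — 2 statements merged into one kernel-verified Lean document; each statement's English description precedes it below -/
import Mathlib

section
/- Let γ₁, γ₂, γ₃ : [0,1] → ℂ be continu103us paths with common endpoints, let H₁ be a homotopy from γ₁ to γ₂ and H₂ a homotopy from γ₂ to γ₃, and suppose the range of γ₂ is a Lebesgue-null subset of ℂ. Then Area(H₁ + H₂) = Area(H₁) + Area(H₂). -/
/-!
Off the middle curve `γ₂`, the fibre of `H₁ + H₂` over `p` is the disjoint union of rescaled
copies of the fibres of `H₁` and `H₂`: the two halves of the square can only meet on the segment
`s = 1/2`, which `H₁ + H₂` maps onto the range of `γ₂`. Hence `E_{H₁+H₂} = E_{H₁} + E_{H₂}` almost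
everywhere, and the lower integral is additive once `E_H` is known to be measurable. For that,
`n ≤ E_H(p)` iff the compact fibre over `p` is covered by `n` pairwise disjoint finite unions of
basic open sets each meeting it, which writes `{p | n ≤ E_H(p)}` as a countable union of Borel sets
built from images under `H` of open and of compact sets.
-/

open MeasureTheory unitInterval ENNReal

noncomputable section

/-- `homE H p` is the number of connected components of the fiber `H⁻¹({p})`,
as an extended natural number. -/
def homE {a b : ℂ} {γ₁ γ₂ : Path a b} (H : Path.Homotopy γ₁ γ₂) (p : ℂ) : ℕ∞ :=
  ENat.card (ConnectedComponents ↥(⇑H ⁻¹' {p}))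

/-- The homotopy area `Area(H) = ∫⁻ x, E_H(x)`. -/
def homArea {a b : ℂ} {γ₁ γ₂ : Path a b} (H : Path.Homotopy γ₁ γ₂) : ℝ≥0∞ :=
  ∫⁻ p, (homE H p : ℝ≥0∞)

/-- The minimum homotopy area `σ(γ₁, γ₂)`, the infimum of `Area(H)` over all
homotopies rel endpoints from `γ₁` to `γ₂`. -/
def minHomArea {a b : ℂ} (γ₁ γ₂ : Path a b) : ℝ≥0∞ :=
  ⨅ H : Path.Homotopy γ₁ γ₂, homArea H

open Set Function Topology TopologicalSpace

namespace ConnectedComponents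

variable {X : Type*} [TopologicalSpace X]

theorem le_enatCard_of_isClopen {ι : Type*} {U : ι → Set X} (hU : ∀ i, IsClopen (U i))
    (hne : ∀ i, (U i).Nonempty) (hd : Pairwise (Disjoint on U)) :
    ENat.card ι ≤ ENat.card (ConnectedComponents X) := by
  choose x hx using hne
  refine ENat.card_le_card_of_injective (f := fun i ↦ mk (x i)) fun i j hij ↦ ?_
  by_contra hne
  have hxj : x i ∈ U j :=
    (hU j).connectedComponent_subset (hx j) (coe_eq_coe'.1 hij)
  exact disjoint_left.1 (hd hne) (hx i) hxj

theorem exists_fun_isClopen_of_le_enatCard {n : ℕ} (hn : 0 < n)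
    (h : n ≤ ENat.card (ConnectedComponents X)) :
    ∃ U : Fin n → Set X, (∀ i, IsClopen (U i)) ∧ (∀ i, (U i).Nonempty) ∧
      Pairwise (Disjoint on U) ∧ ⋃ i, U i = univ := by
  cases finite_or_infinite (ConnectedComponents X)
  · obtain ⟨e, -⟩ := Fin.Embedding.exists_embedding_disjoint_range_of_add_le_ENat_card
      (s := (∅ : Set (ConnectedComponents X))) (by simpa using h)
    have : Nonempty (Fin n) := ⟨⟨0, hn⟩⟩
    have hg : Surjective (invFun e ∘ mk) := (invFun_surjective e.injective).comp surjective_coe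
    refine ⟨fun i ↦ (invFun e ∘ mk) ⁻¹' {i}, fun i ↦ ?_, fun i ↦ (hg i).imp fun _ ↦ id,
      fun i j hij ↦ Disjoint.preimage _ (by simpa),
      by rw [← preimage_iUnion, iUnion_of_singleton, preimage_univ]⟩
    exact (isClopen_discrete _).preimage ((continuous_of_discreteTopology).comp continuous_coe)
  · exact exists_fun_isClopen_of_infinite X n hn

end ConnectedComponents

def Homeomorph.connectedComponentsEquiv {X Y : Type*} [TopologicalSpace X] [TopologicalSpace Y]
    (e : X ≃ₜ Y) : ConnectedComponents X ≃ ConnectedComponents Y where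
  toFun := e.continuous.connectedComponentsMap
  invFun := e.symm.continuous.connectedComponentsMap
  left_inv := by rintro ⟨x⟩; exact congrArg ConnectedComponents.mk (e.symm_apply_apply x)
  right_inv := by rintro ⟨y⟩; exact congrArg ConnectedComponents.mk (e.apply_symm_apply y)

def ConnectedComponents.sumEquiv (X Y : Type*) [TopologicalSpace X] [TopologicalSpace Y] :
    ConnectedComponents (X ⊕ Y) ≃ ConnectedComponents X ⊕ ConnectedComponents Y where
  toFun := Continuous.connectedComponentsLift
    (f := Sum.elim (Sum.inl ∘ ConnectedComponents.mk) (Sum.inr ∘ ConnectedComponents.mk))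
    ((continuous_inl.comp continuous_coe).sumElim (continuous_inr.comp continuous_coe))
  invFun := Sum.elim (Continuous.connectedComponentsMap continuous_inl)
    (Continuous.connectedComponentsMap continuous_inr)
  left_inv := by rintro ⟨x | y⟩ <;> rfl
  right_inv := by
    rintro (x | y) <;> [induction x using Quotient.ind; induction y using Quotient.ind] <;> rfl

theorem Continuous.enatCard_connectedComponents_eq_add {A B X : Type*} [TopologicalSpace A]
    [TopologicalSpace B] [TopologicalSpace X] [CompactSpace A] [CompactSpace B] [T2Space X]
    {g : A ⊕ B → X} (hg : Continuous g) (hbij : Bijective g) :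
    ENat.card (ConnectedComponents X) =
      ENat.card (ConnectedComponents A) + ENat.card (ConnectedComponents B) := by
  rw [← ENat.card_sum, ← ENat.card_congr (ConnectedComponents.sumEquiv A B),
    ENat.card_congr
      (hg.homeoOfEquivCompactToT2 (f := .ofBijective g hbij)).connectedComponentsEquiv]

def finiteUnions {α : Type*} (B : Set (Set α)) : Set (Set α) :=
  sUnion '' {s | s.Finite ∧ s ⊆ B}

theorem Set.Countable.finiteUnions {α : Type*} {B : Set (Set α)} (hB : B.Countable) :
    (finiteUnions B).Countable :=
  (countable_ofPred_finite_subset hB).image _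

section Topology

variable {X : Type*} [TopologicalSpace X]

theorem isClopen_of_isOpen_of_iUnion_eq_univ {ι : Type*} {U : ι → Set X}
    (hU : ∀ i, IsOpen (U i)) (hd : Pairwise (Disjoint on U)) (hcov : ⋃ i, U i = univ) (i : ι) :
    IsClopen (U i) := by
  refine ⟨⟨?_⟩, hU i⟩
  convert isOpen_biUnion (s := {i}ᶜ) fun j _ ↦ hU j
  ext x
  obtain ⟨j, hj⟩ := mem_iUnion.1 (hcov ▸ mem_univ x)
  simp only [mem_compl_iff, mem_iUnion, mem_singleton_iff, exists_prop]
  exact ⟨fun hx ↦ ⟨j, fun hji ↦ hx (hji ▸ hj), hj⟩,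
    fun ⟨k, hki, hk⟩ hi ↦ disjoint_left.1 (hd hki) hk hi⟩

theorem exists_isOpen_pairwise_disjoint_superset [T2Space X] {ι : Type*} [Finite ι]
    {C : ι → Set X} (hC : ∀ i, IsCompact (C i)) (hd : Pairwise (Disjoint on C)) :
    ∃ U : ι → Set X, (∀ i, IsOpen (U i)) ∧ (∀ i, C i ⊆ U i) ∧ Pairwise (Disjoint on U) := by
  have hsep : ∀ i j, ∃ V W : Set X, IsOpen V ∧ IsOpen W ∧ C i ⊆ V ∧ C j ⊆ W ∧
      (i ≠ j → Disjoint V W) := by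
    intro i j
    by_cases hij : i = j
    · exact ⟨univ, univ, isOpen_univ, isOpen_univ, subset_univ _, subset_univ _, absurd hij⟩
    · obtain ⟨V, W, hV, hW, hCV, hCW, hVW⟩ :=
        SeparatedNhds.of_isCompact_isCompact (hC i) (hC j) (hd hij)
      exact ⟨V, W, hV, hW, hCV, hCW, fun _ ↦ hVW⟩
  choose V W hV hW hCV hCW hVW using hsep
  refine ⟨fun i ↦ ⋂ j, V i j ∩ W j i,
    fun i ↦ isOpen_iInter_of_finite fun j ↦ (hV i j).inter (hW j i),
    fun i ↦ subset_iInter fun j ↦ subset_inter (hCV i j) (hCW j i), fun i j hij ↦ ?_⟩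
  exact (hVW i j hij).mono ((iInter_subset _ j).trans inter_subset_left)
    ((iInter_subset _ i).trans inter_subset_right)

theorem TopologicalSpace.IsTopologicalBasis.exists_finite_sUnion_between {B : Set (Set X)}
    (hB : IsTopologicalBasis B) {K U : Set X} (hK : IsCompact K) (hU : IsOpen U) (hKU : K ⊆ U) :
    ∃ s ⊆ B, s.Finite ∧ K ⊆ ⋃₀ s ∧ ⋃₀ s ⊆ U := by
  obtain ⟨s, hs, hsf, hKs⟩ := hK.elim_finite_subcover_image (b := {b ∈ B | b ⊆ U}) (c := id)
    (fun b hb ↦ hB.isOpen hb.1) fun x hx ↦ by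
      obtain ⟨b, hb, hxb, hbU⟩ := hB.exists_subset_of_mem_open (hKU hx) hU
      exact mem_biUnion ⟨hb, hbU⟩ hxb
  exact ⟨s, fun b hb ↦ (hs hb).1, hsf, by simpa [sUnion_eq_biUnion] using hKs,
    sUnion_subset fun b hb ↦ (hs hb).2⟩

theorem TopologicalSpace.IsTopologicalBasis.isOpen_of_mem_finiteUnions {B : Set (Set X)}
    (hB : IsTopologicalBasis B) {U : Set X} (hU : U ∈ finiteUnions B) : IsOpen U := by
  obtain ⟨s, ⟨-, hsB⟩, rfl⟩ := hU
  exact isOpen_sUnion fun b hb ↦ hB.isOpen (hsB hb)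

theorem le_enatCard_connectedComponents_iff [T2Space X] {B : Set (Set X)}
    (hB : IsTopologicalBasis B) {K : Set X} (hK : IsCompact K) {n : ℕ} (hn : 0 < n) :
    n ≤ ENat.card (ConnectedComponents K) ↔ ∃ V : Fin n → Set X, (∀ i, V i ∈ finiteUnions B) ∧
      Pairwise (Disjoint on V) ∧ K ⊆ ⋃ i, V i ∧ ∀ i, (K ∩ V i).Nonempty := by
  have : CompactSpace K := isCompact_iff_compactSpace.1 hK
  constructor
  · intro h
    obtain ⟨U, hUc, hUne, hUd, hUcov⟩ := ConnectedComponents.exists_fun_isClopen_of_le_enatCard hn h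
    have hC : ∀ i, IsCompact (((↑) : K → X) '' U i) :=
      fun i ↦ (hUc i).isClosed.isCompact.image continuous_subtype_val
    obtain ⟨W, hWo, hUW, hWd⟩ := exists_isOpen_pairwise_disjoint_superset hC
      fun i j hij ↦ disjoint_image_of_injective Subtype.val_injective (hUd hij)
    choose s hsB hsf hUs hsW using fun i ↦ hB.exists_finite_sUnion_between (hC i) (hWo i) (hUW i)
    refine ⟨fun i ↦ ⋃₀ s i, fun i ↦ ⟨s i, ⟨hsf i, hsB i⟩, rfl⟩,
      fun i j hij ↦ (hWd hij).mono (hsW i) (hsW j), fun x hx ↦ ?_, fun i ↦ ?_⟩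
    · obtain ⟨i, hi⟩ := mem_iUnion.1 (hUcov ▸ mem_univ (⟨x, hx⟩ : K))
      exact mem_iUnion.2 ⟨i, hUs i ⟨_, hi, rfl⟩⟩
    · obtain ⟨x, hx⟩ := hUne i
      exact ⟨x, x.2, hUs i ⟨x, hx, rfl⟩⟩
  · rintro ⟨V, hVB, hVd, hKV, hVne⟩
    have hUo : ∀ i, IsOpen (((↑) : K → X) ⁻¹' V i) :=
      fun i ↦ (hB.isOpen_of_mem_finiteUnions (hVB i)).preimage continuous_subtype_val
    have hUcov : ⋃ i, ((↑) : K → X) ⁻¹' V i = univ := by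
      rw [← preimage_iUnion, preimage_eq_univ_iff, Subtype.range_coe]
      exact hKV
    have hUd : Pairwise (Disjoint on fun i ↦ ((↑) : K → X) ⁻¹' V i) :=
      fun i j hij ↦ (hVd hij).preimage _
    simpa using ConnectedComponents.le_enatCard_of_isClopen
      (isClopen_of_isOpen_of_iUnion_eq_univ hUo hUd hUcov)
      (fun i ↦ (hVne i).elim fun x hx ↦ ⟨⟨x, hx.1⟩, hx.2⟩) hUd

end Topology

theorem ENat.measurable_of_measurableSet_le {α : Type*} [MeasurableSpace α] {f : α → ℕ∞}
    (h : ∀ n : ℕ, 0 < n → MeasurableSet {x | (n : ℕ∞) ≤ f x}) : Measurable f := by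
  have hle : ∀ n : ℕ, MeasurableSet {x | (n : ℕ∞) ≤ f x} := by
    rintro (_ | n)
    · simp
    · exact h _ n.succ_pos
  refine ENat.measurable_iff.2 fun n ↦ ?_
  convert (hle n).diff (hle (n + 1)) using 1
  ext x
  simp [le_antisymm_iff, ENat.add_one_le_iff (ENat.natCast_ne_top n), and_comm]

section Measurability

variable {Y Z : Type*} [TopologicalSpace Z] [T2Space Z] [MeasurableSpace Z]
  [OpensMeasurableSpace Z] {f : Y → Z}

theorem Continuous.measurableSet_image_of_isOpen [PseudoEMetricSpace Y] [CompactSpace Y]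
    (hf : Continuous f) {U : Set Y} (hU : IsOpen U) : MeasurableSet (f '' U) := by
  obtain ⟨F, hF, -, rfl, -⟩ := hU.exists_iUnion_isClosed
  rw [image_iUnion]
  exact .iUnion fun n ↦ ((hF n).isCompact.image hf).isClosed.measurableSet

theorem Continuous.measurable_enatCard_connectedComponents_preimage [EMetricSpace Y]
    [CompactSpace Y] (hf : Continuous f) :
    Measurable fun z ↦ ENat.card (ConnectedComponents (f ⁻¹' {z})) := by
  obtain ⟨B, hBc, -, hB⟩ := exists_countable_basis Y
  refine ENat.measurable_of_measurableSet_le fun n hn ↦ ?_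
  have hset : {z | (n : ℕ∞) ≤ ENat.card (ConnectedComponents (f ⁻¹' {z}))} =
      ⋃ V ∈ {V : Fin n → Set Y | ∀ i, V i ∈ finiteUnions B}, ⋃ (_ : Pairwise (Disjoint on V)),
        {z | f ⁻¹' {z} ⊆ ⋃ i, V i} ∩ ⋂ i, {z | (f ⁻¹' {z} ∩ V i).Nonempty} := by
    ext z
    simp only [mem_ofPred_eq, le_enatCard_connectedComponents_iff hB
      (isClosed_singleton.preimage hf).isCompact hn, mem_iUnion, mem_inter_iff, mem_iInter,
      exists_prop]
  have himage : ∀ U : Set Y, {z | (f ⁻¹' {z} ∩ U).Nonempty} = f '' U := by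
    intro U; ext z; simp [Set.Nonempty, and_comm]
  have hcover : ∀ U : Set Y, {z | f ⁻¹' {z} ⊆ U} = (f '' Uᶜ)ᶜ := by
    intro U; ext z; simp [subset_def, not_imp_comm]
  rw [hset]
  refine .biUnion (countable_pi fun _ ↦ hBc.finiteUnions) fun V hV ↦ .iUnion fun _ ↦ ?_
  have hVo : ∀ i, IsOpen (V i) := fun i ↦ hB.isOpen_of_mem_finiteUnions (hV i)
  simp only [hcover, himage]
  exact ((isOpen_iUnion hVo).isClosed_compl.isCompact.image hf).isClosed.measurableSet.compl.inter
    (.iInter fun i ↦ hf.measurableSet_image_of_isOpen (hVo i))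

end Measurability

namespace unitInterval

def firstHalf (s : I) : I := ⟨s / 2, by constructor <;> linarith [s.2.1, s.2.2]⟩

def secondHalf (s : I) : I := ⟨(s + 1) / 2, by constructor <;> linarith [s.2.1, s.2.2]⟩

@[simp] theorem coe_firstHalf (s : I) : (firstHalf s : ℝ) = s / 2 := rfl

@[simp] theorem coe_secondHalf (s : I) : (secondHalf s : ℝ) = (s + 1) / 2 := rfl

@[fun_prop] theorem continuous_firstHalf : Continuous firstHalf := by
  unfold firstHalf; fun_prop

@[fun_prop] theorem continuous_secondHalf : Continuous secondHalf := by
  unfold secondHalf; fun_prop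

theorem firstHalf_injective : Injective firstHalf := fun s t h ↦
  Subtype.ext (by simpa using congrArg Subtype.val h)

theorem secondHalf_injective : Injective secondHalf := fun s t h ↦
  Subtype.ext (by simpa using congrArg Subtype.val h)

theorem eq_one_of_firstHalf_eq_secondHalf {s t : I} (h : firstHalf s = secondHalf t) : s = 1 := by
  have := congrArg Subtype.val h
  simp only [coe_firstHalf, coe_secondHalf] at this
  exact Subtype.ext (show (s : ℝ) = 1 by linarith [s.2.2, t.2.1])

theorem exists_firstHalf_or_secondHalf_eq (s : I) :
    (∃ r, firstHalf r = s) ∨ ∃ r, secondHalf r = s := by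
  by_cases hs : (s : ℝ) ≤ 1 / 2
  · exact .inl ⟨⟨2 * s, by constructor <;> linarith [s.2.1]⟩, Subtype.ext (by simp)⟩
  · exact .inr ⟨⟨2 * s - 1, by constructor <;> linarith [s.2.2]⟩, Subtype.ext (by simp)⟩

end unitInterval

namespace ContinuousMap.Homotopy

variable {X Y : Type*} [TopologicalSpace X] [TopologicalSpace Y] {f₀ f₁ f₂ : C(X, Y)}
  (F : Homotopy f₀ f₁) (G : Homotopy f₁ f₂)

theorem trans_apply_firstHalf (s : I) (x : X) : F.trans G (firstHalf s, x) = F (s, x) := by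
  rw [trans_apply, dif_pos (by simp only [coe_firstHalf]; linarith [s.2.2])]
  congr
  simp only [coe_firstHalf]
  ring

theorem trans_apply_secondHalf (s : I) (x : X) : F.trans G (secondHalf s, x) = G (s, x) := by
  rw [trans_apply]
  split_ifs with hs
  · obtain rfl : s = 0 :=
      Subtype.ext (show (s : ℝ) = 0 by simp only [coe_secondHalf] at hs; linarith [s.2.1])
    simp
  · congr
    simp only [coe_secondHalf]
    ring

theorem enatCard_connectedComponents_trans_preimage [CompactSpace X] [T2Space X] [T1Space Y]
    {p : Y} (hp : p ∉ range f₁) :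
    ENat.card (ConnectedComponents ((F.trans G) ⁻¹' {p})) =
      ENat.card (ConnectedComponents (F ⁻¹' {p})) +
        ENat.card (ConnectedComponents (G ⁻¹' {p})) := by
  set T := (F.trans G) ⁻¹' {p}
  have hL : ⇑F = F.trans G ∘ Prod.map firstHalf id :=
    funext fun x ↦ (F.trans_apply_firstHalf G x.1 x.2).symm
  have hR : ⇑G = F.trans G ∘ Prod.map secondHalf id :=
    funext fun x ↦ (F.trans_apply_secondHalf G x.1 x.2).symm
  have hT : IsClosed T := isClosed_singleton.preimage (map_continuous _)
  have : CompactSpace (Prod.map firstHalf id ⁻¹' T) :=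
    isCompact_iff_compactSpace.1 (hT.preimage (by fun_prop)).isCompact
  have : CompactSpace (Prod.map secondHalf id ⁻¹' T) :=
    isCompact_iff_compactSpace.1 (hT.preimage (by fun_prop)).isCompact
  rw [hL, hR, preimage_comp, preimage_comp]
  refine Continuous.enatCard_connectedComponents_eq_add
    (g := Sum.elim (T.restrictPreimage (Prod.map firstHalf id))
      (T.restrictPreimage (Prod.map secondHalf id)))
    (.sumElim (Continuous.restrictPreimage (by fun_prop))
      (Continuous.restrictPreimage (by fun_prop))) ⟨?_, ?_⟩
  · refine (restrictPreimage_injective _ (firstHalf_injective.prodMap injective_id)).sumElim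
      (restrictPreimage_injective _ (secondHalf_injective.prodMap injective_id)) ?_
    rintro ⟨⟨s, x⟩, hsx⟩ ⟨⟨t, x'⟩, _⟩ h
    obtain ⟨hst, -⟩ := Prod.ext_iff.1 (congrArg Subtype.val h)
    obtain rfl := eq_one_of_firstHalf_eq_secondHalf hst
    exact hp ⟨x, by simpa [T, F.trans_apply_firstHalf G] using hsx⟩
  · rintro ⟨⟨s, x⟩, hsx⟩
    rcases exists_firstHalf_or_secondHalf_eq s with ⟨r, rfl⟩ | ⟨r, rfl⟩
    · exact ⟨.inl ⟨(r, x), hsx⟩, rfl⟩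
    · exact ⟨.inr ⟨(r, x), hsx⟩, rfl⟩

end ContinuousMap.Homotopy

/-- Homotopy area is additive under concatenation, provided the middle curve has
Lebesgue-null range. -/
theorem stmt_2 {a b : ℂ} (γ₁ γ₂ γ₃ : Path a b)
    (H₁ : Path.Homotopy γ₁ γ₂) (H₂ : Path.Homotopy γ₂ γ₃)
    (hnull : volume (Set.range γ₂) = 0) :
    homArea (H₁.trans H₂) = homArea H₁ + homArea H₂ := by
  have hmeas : Measurable fun p ↦ (homE H₁ p : ℝ≥0∞) :=
    measurable_from_top.comp H₁.continuous.measurable_enatCard_connectedComponents_preimage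
  have hadd : ∀ᵐ p, (homE (H₁.trans H₂) p : ℝ≥0∞) = homE H₁ p + homE H₂ p := by
    filter_upwards [measure_eq_zero_iff_ae_notMem.1 hnull] with p hp
    rw [← ENat.toENNReal_add]
    exact congrArg _ (H₁.toHomotopy.enatCard_connectedComponents_trans_preimage H₂.toHomotopy hp)
  rw [homArea, lintegral_congr_ae hadd, lintegral_add_left hmeas]
  rfl
end
end

section
/- For all continuous paths γ₁, γ₂, γ₃ : [0,1] → ℂ with common endpoints, the minimum homotopy area satisfies the triangle inequality: σ(γ₁, γ₃) ≤ σ(γ₁, γ₂) + σ(γ₂, γ₃). -/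
open MeasureTheory unitInterval ENNReal

noncomputable section

/-!
Concatenating homotopies `H₁ : γ₁ ≃ γ₂` and `H₂ : γ₂ ≃ γ₃` gives a homotopy whose fiber over
each point is covered by continuous images of the fibers of `H₁` and `H₂`, so
`E_{H₁·H₂} ≤ E_{H₁} + E_{H₂}` pointwise; integrating and taking infima gives the triangle
inequality.

Integrating the sum needs `p ↦ E_H(p)` to be measurable. Approximate the fiber `F = H⁻¹{p}` by
the union `W` of the balls of a fine finite net of `I × I` that meet `F`. Balls are connected, so
`W` has at most as many components as `F`; two components of the compact set `F` are separated
by a clopen partition of `F` with a positive gap, so once the net is fine enough they stay in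
different components of `W`. Hence `E_H(p)` is the supremum of these approximations, each of
which depends on `p` only through which of finitely many compact sets `H(ball)` contain `p`.
-/

open Metric Set Filter Topology

theorem ENat.card_le_card_of_surjective {α β : Type*} {f : α → β} (hf : Function.Surjective f) :
    ENat.card β ≤ ENat.card α :=
  ENat.card_le_card_of_injective (Function.injective_surjInv hf)

section ConnectedComponents

variable {X Y T : Type*} [TopologicalSpace X] [TopologicalSpace Y] [TopologicalSpace T]

theorem ENat.card_connectedComponents_le_add {f : X → T} {g : Y → T} (hf : Continuous f)
    (hg : Continuous g) (hfg : range f ∪ range g = univ) :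
    ENat.card (ConnectedComponents T) ≤
      ENat.card (ConnectedComponents X) + ENat.card (ConnectedComponents Y) := by
  rw [← ENat.card_sum]
  refine ENat.card_le_card_of_surjective
    (f := Sum.elim hf.connectedComponentsMap hg.connectedComponentsMap) ?_
  refine ConnectedComponents.surjective_coe.forall.2 fun t => ?_
  rcases hfg.symm ▸ mem_univ t with ⟨x, rfl⟩ | ⟨y, rfl⟩
  exacts [⟨.inl (.mk x), rfl⟩, ⟨.inr (.mk y), rfl⟩]

theorem ENat.card_connectedComponents_fiber_le_add {Z : Type*} {h : T → Z} {f : X → T}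
    {g : Y → T} (hf : Continuous f) (hg : Continuous g) (hfg : range f ∪ range g = univ) (z : Z) :
    ENat.card (ConnectedComponents ↥(h ⁻¹' {z})) ≤
      ENat.card (ConnectedComponents ↥((h ∘ f) ⁻¹' {z})) +
        ENat.card (ConnectedComponents ↥((h ∘ g) ⁻¹' {z})) := by
  refine ENat.card_connectedComponents_le_add
    (hf.restrict (s := (h ∘ f) ⁻¹' {z}) (t := h ⁻¹' {z}) fun _ => id)
    (hg.restrict (s := (h ∘ g) ⁻¹' {z}) (t := h ⁻¹' {z}) fun _ => id) ?_
  refine eq_univ_of_forall fun ⟨t, ht⟩ => ?_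
  rcases hfg.symm ▸ mem_univ t with ⟨x, rfl⟩ | ⟨y, rfl⟩
  exacts [.inl ⟨⟨x, ht⟩, rfl⟩, .inr ⟨⟨y, ht⟩, rfl⟩]

theorem ENat.card_connectedComponents_iUnion_le {ι : Type*} {F : Set X} {B : ι → Set X}
    (hB : ∀ i, IsPreconnected (B i)) (hBF : ∀ i, (B i ∩ F).Nonempty) (hFB : F ⊆ ⋃ i, B i) :
    ENat.card (ConnectedComponents ↥(⋃ i, B i)) ≤ ENat.card (ConnectedComponents F) := by
  refine ENat.card_le_card_of_surjective (f := (continuous_inclusion hFB).connectedComponentsMap) ?_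
  refine ConnectedComponents.surjective_coe.forall.2 fun ⟨w, hw⟩ => ?_
  obtain ⟨i, hwi⟩ := mem_iUnion.1 hw
  obtain ⟨x, hxi, hxF⟩ := hBF i
  have hBi : IsPreconnected (Subtype.val ⁻¹' B i : Set ↥(⋃ i, B i)) := by
    rw [← Topology.IsInducing.subtypeVal.isPreconnected_image, Subtype.image_preimage_coe,
      inter_eq_right.2 (subset_iUnion B i)]
    exact hB i
  exact ⟨.mk ⟨x, hxF⟩, ConnectedComponents.coe_eq_coe'.2 (hBi.subset_connectedComponent hwi hxi)⟩

end ConnectedComponents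

section CompactMetric

variable {K : Type*} [MetricSpace K]

theorem IsCompact.eventually_connectedComponents_mk_inclusion_ne {F : Set K} (hF : IsCompact F)
    {x y : F} (hxy : ConnectedComponents.mk x ≠ ConnectedComponents.mk y) :
    ∀ᶠ ε in 𝓝 (0 : ℝ), ∀ (W : Set K) (hFW : F ⊆ W), W ⊆ cthickening ε F →
      ConnectedComponents.mk (inclusion hFW x) ≠ ConnectedComponents.mk (inclusion hFW y) := by
  have : CompactSpace F := isCompact_iff_compactSpace.1 hF
  have hy : y ∉ connectedComponent x := fun h => hxy (ConnectedComponents.coe_eq_coe'.2 h).symm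
  rw [connectedComponent_eq_iInter_isClopen] at hy
  obtain ⟨Z, hZ, hxZ, hyZ⟩ : ∃ Z : Set F, IsClopen Z ∧ x ∈ Z ∧ y ∉ Z := by simpa using hy
  set A : Set K := (↑) '' Z
  set B : Set K := (↑) '' Zᶜ
  have hAB : Disjoint A B := (disjoint_image_iff Subtype.val_injective).2 disjoint_compl_right
  obtain ⟨δ, hδ, hAB'⟩ :=
    hAB.exists_cthickenings (hZ.isClosed.isCompact.image continuous_subtype_val)
    (hZ.compl.isClosed.isCompact.image continuous_subtype_val).isClosed
  have hFAB : F = A ∪ B := by rw [← image_union, union_compl_self, image_univ, Subtype.range_coe]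
  filter_upwards [eventually_le_nhds hδ] with ε hε W hFW hWF hxy'
  have hW : W ⊆ cthickening δ A ∪ cthickening δ B := by
    rw [← cthickening_union, ← hFAB]
    exact hWF.trans (cthickening_mono hε F)
  let S : Set W := Subtype.val ⁻¹' cthickening δ A
  have hS : S = (Subtype.val ⁻¹' cthickening δ B)ᶜ := by
    ext ⟨w, hwW⟩
    exact ⟨fun hwA hwB => hAB'.notMem_of_mem_left hwA hwB, (hW hwW).resolve_right⟩
  have hSclopen : IsClopen S :=
    ⟨isClosed_cthickening.preimage continuous_subtype_val,
      hS ▸ (isClosed_cthickening.preimage continuous_subtype_val).isOpen_compl⟩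
  have hyS : inclusion hFW y ∈ S :=
    hSclopen.connectedComponent_subset (self_subset_cthickening A ⟨x, hxZ, rfl⟩)
      (ConnectedComponents.coe_eq_coe'.1 hxy'.symm)
  exact hAB'.notMem_of_mem_left hyS (self_subset_cthickening B ⟨y, hyZ, rfl⟩)

theorem IsCompact.eventually_le_card_connectedComponents {F : Set K} (hF : IsCompact F) {k : ℕ}
    (hk : (k : ℕ∞) ≤ ENat.card (ConnectedComponents F)) :
    ∀ᶠ ε in 𝓝 (0 : ℝ), ∀ W : Set K, F ⊆ W → W ⊆ cthickening ε F →
      (k : ℕ∞) ≤ ENat.card (ConnectedComponents W) := by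
  rw [ENat.card, Cardinal.natCast_le_toENat] at hk
  obtain ⟨e⟩ : Nonempty (ULift (Fin k) ↪ ConnectedComponents F) := by
    rw [← Cardinal.le_def]; simpa using hk
  choose x hx using fun i => ConnectedComponents.surjective_coe (e i)
  have hsep : ∀ᶠ ε in 𝓝 (0 : ℝ), ∀ i j, i ≠ j → ∀ (W : Set K) (hFW : F ⊆ W),
      W ⊆ cthickening ε F →
        ConnectedComponents.mk (inclusion hFW (x i)) ≠
          ConnectedComponents.mk (inclusion hFW (x j)) :=
    eventually_all.2 fun i => eventually_all.2 fun j => eventually_imp_distrib_left.2 fun hij =>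
      hF.eventually_connectedComponents_mk_inclusion_ne (by rw [hx, hx]; exact e.injective.ne hij)
  filter_upwards [hsep] with ε hε W hFW hWF
  calc (k : ℕ∞) = ENat.card (ULift (Fin k)) := by simp
    _ ≤ ENat.card (ConnectedComponents W) :=
      ENat.card_le_card_of_injective (f := fun i => .mk (inclusion hFW (x i)))
        fun i j h => by_contra fun hij => hε i j hij W hFW hWF h

theorem measurable_card_connectedComponents_iUnion_closedBall [CompactSpace K] {Z : Type*}
    [TopologicalSpace Z] [T2Space Z] [MeasurableSpace Z] [OpensMeasurableSpace Z] {f : K → Z}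
    (hf : Continuous f) {T : Set K} (hT : T.Finite) (r : ℝ) :
    Measurable fun z => (ENat.card (ConnectedComponents
      ↥(⋃ t : {t : T // z ∈ f '' closedBall t r}, closedBall (t : K) r)) : ℝ≥0∞) := by
  have := hT.to_subtype
  exact (measurable_of_countable fun s : T → Prop => (ENat.card (ConnectedComponents
    ↥(⋃ t : {t // s t}, closedBall (t : K) r)) : ℝ≥0∞)).comp <| measurable_pi_lambda _
      fun t => measurableSet_setOfPred.1
        (isClosed_closedBall.isCompact.image hf).isClosed.measurableSet

theorem measurable_card_connectedComponents_fiber [CompactSpace K] {Z : Type*}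
    [TopologicalSpace Z] [T2Space Z] [MeasurableSpace Z] [OpensMeasurableSpace Z]
    (hK : ∀ (x : K) (r : ℝ), IsPreconnected (closedBall x r)) {f : K → Z} (hf : Continuous f) :
    Measurable fun z => (ENat.card (ConnectedComponents ↥(f ⁻¹' {z})) : ℝ≥0∞) := by
  set r : ℕ → ℝ := fun n => 1 / (n + 1)
  have hr : ∀ n, 0 < r n := fun n => Nat.one_div_pos_of_nat
  choose T _ hTfin hT using fun n => (isCompact_univ (X := K)).finite_cover_balls (hr n)
  let W (n : ℕ) (z : Z) : Set K :=
    ⋃ t : {t : T n // z ∈ f '' closedBall t (r n)}, closedBall (t : K) (r n)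
  have hFW : ∀ n z, f ⁻¹' {z} ⊆ W n z := fun n z x hx => by
    obtain ⟨t, ht, hxt⟩ := mem_iUnion₂.1 (hT n (mem_univ x))
    exact mem_iUnion.2 ⟨⟨⟨t, ht⟩, x, ball_subset_closedBall hxt, hx⟩, ball_subset_closedBall hxt⟩
  have hWF : ∀ n z, W n z ⊆ cthickening (2 * r n) (f ⁻¹' {z}) := fun n z w hw => by
    obtain ⟨⟨t, x, hxt, hx⟩, hwt⟩ := mem_iUnion.1 hw
    refine mem_cthickening_of_dist_le w x _ _ hx ?_
    linarith [dist_triangle_right w x t, mem_closedBall.1 hxt, mem_closedBall.1 hwt]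
  have hr2 : Tendsto (fun n => 2 * r n) atTop (𝓝 0) := by
    simpa [r] using tendsto_one_div_add_atTop_nhds_zero_nat.const_mul (2 : ℝ)
  have hsup : ∀ z, ENat.card (ConnectedComponents ↥(f ⁻¹' {z})) =
      ⨆ n, ENat.card (ConnectedComponents ↥(W n z)) := fun z => by
    refine le_antisymm (ENat.forall_natCast_le_iff_le.1 fun k hk => ?_) (iSup_le fun n => ?_)
    · have hF : IsCompact (f ⁻¹' {z}) := (isClosed_singleton.preimage hf).isCompact
      obtain ⟨n, hn⟩ := (hr2.eventually (hF.eventually_le_card_connectedComponents hk)).exists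
      exact (hn _ (hFW n z) (hWF n z)).trans (le_iSup_of_le n le_rfl)
    · exact ENat.card_connectedComponents_iUnion_le (fun t => hK _ _)
        (fun ⟨_, x, hxt, hx⟩ => ⟨x, hxt, hx⟩) (hFW n z)
  simp_rw [hsup, ENat.toENNReal_mono.map_iSup_of_continuousAt
    ENat.continuous_toENNReal.continuousAt ENat.toENNReal_zero]
  exact .iSup fun n => measurable_card_connectedComponents_iUnion_closedBall hf (hTfin n) (r n)

end CompactMetric

theorem isPreconnected_closedBall_unitInterval_prod (x : I × I) (r : ℝ) :
    IsPreconnected (closedBall x r) := by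
  have hI : ∀ (s : I) (r : ℝ), IsPreconnected (closedBall s r) := fun s r =>
    (Real.closedBall_eq_Icc ▸ ordConnected_Icc).preimage_mono (Subtype.mono_coe _) |>.isPreconnected
  rw [← closedBall_prod_same]
  exact (hI _ _).prod (hI _ _)

theorem measurable_homE {a b : ℂ} {γ₁ γ₂ : Path a b} (H : γ₁.Homotopy γ₂) :
    Measurable fun p => (homE H p : ℝ≥0∞) :=
  measurable_card_connectedComponents_fiber isPreconnected_closedBall_unitInterval_prod H.continuous

namespace unitInterval

def lowerHalf (s : I) : I :=
  ⟨s / 2, div_mem s.2.1 zero_le_two (s.2.2.trans one_le_two)⟩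

def upperHalf (s : I) : I :=
  ⟨(s + 1) / 2, div_mem (by linarith [s.2.1]) zero_le_two (by linarith [s.2.2])⟩

theorem continuous_lowerHalf : Continuous lowerHalf := by
  unfold lowerHalf; fun_prop

theorem continuous_upperHalf : Continuous upperHalf := by
  unfold upperHalf; fun_prop

theorem range_lowerHalf_union_range_upperHalf : range lowerHalf ∪ range upperHalf = univ := by
  refine eq_univ_of_forall fun s => ?_
  by_cases hs : (s : ℝ) ≤ 1 / 2
  · exact .inl ⟨⟨2 * s, (mul_pos_mem_iff zero_lt_two).2 ⟨s.2.1, hs⟩⟩,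
      Subtype.ext (by simp [lowerHalf])⟩
  · exact .inr ⟨⟨2 * s - 1, two_mul_sub_one_mem_iff.2 ⟨by linarith, s.2.2⟩⟩,
      Subtype.ext (by simp [upperHalf])⟩

end unitInterval

namespace Path.Homotopy

variable {X : Type*} [TopologicalSpace X] {x₀ x₁ : X} {γ₁ γ₂ γ₃ : Path x₀ x₁}

theorem trans_comp_prodMap_lowerHalf (H₁ : γ₁.Homotopy γ₂) (H₂ : γ₂.Homotopy γ₃) :
    ⇑(H₁.trans H₂) ∘ Prod.map lowerHalf id = ⇑H₁ := by
  funext x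
  rw [Function.comp_apply, trans_apply, dif_pos (by simp [lowerHalf]; linarith [x.1.2.2])]
  congr 2
  exact Subtype.ext (by simp [lowerHalf]; ring)

theorem trans_comp_prodMap_upperHalf (H₁ : γ₁.Homotopy γ₂) (H₂ : γ₂.Homotopy γ₃) :
    ⇑(H₁.trans H₂) ∘ Prod.map upperHalf id = ⇑H₂ := by
  funext ⟨s, t⟩
  rw [Function.comp_apply, trans_apply]
  split_ifs with hs
  · obtain rfl : s = 0 := Set.Icc.coe_eq_zero.1 (le_antisymm
      (by simp only [Prod.map_fst, upperHalf] at hs; linarith) s.2.1)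
    convert (H₁.apply_one t).trans (H₂.apply_zero t).symm using 3
    · exact Subtype.ext (by norm_num [upperHalf])
    · rfl
  · congr 2
    exact Subtype.ext (by simp [upperHalf]; ring)

end Path.Homotopy

theorem homE_trans_le {a b : ℂ} {γ₁ γ₂ γ₃ : Path a b} (H₁ : γ₁.Homotopy γ₂) (H₂ : γ₂.Homotopy γ₃)
    (p : ℂ) : homE (H₁.trans H₂) p ≤ homE H₁ p + homE H₂ p := by
  have hcover : range (Prod.map lowerHalf (id : I → I)) ∪ range (Prod.map upperHalf id) = univ := by
    rw [range_prodMap, range_prodMap, ← union_prod, range_lowerHalf_union_range_upperHalf,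
      range_id, univ_prod_univ]
  have := ENat.card_connectedComponents_fiber_le_add (h := H₁.trans H₂)
    (continuous_lowerHalf.prodMap continuous_id) (continuous_upperHalf.prodMap continuous_id)
    hcover p
  rwa [H₁.trans_comp_prodMap_lowerHalf, H₁.trans_comp_prodMap_upperHalf] at this

theorem homArea_trans_le {a b : ℂ} {γ₁ γ₂ γ₃ : Path a b} (H₁ : γ₁.Homotopy γ₂)
    (H₂ : γ₂.Homotopy γ₃) : homArea (H₁.trans H₂) ≤ homArea H₁ + homArea H₂ := by
  rw [homArea, homArea, homArea, ← lintegral_add_left (measurable_homE H₁)]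
  refine lintegral_mono fun p => ?_
  rw [← ENat.toENNReal_add]
  exact ENat.toENNReal_le.2 (homE_trans_le H₁ H₂ p)

/-- The minimum homotopy area satisfies the triangle inequality. -/
theorem stmt_5 {a b : ℂ} (γ₁ γ₂ γ₃ : Path a b) :
    minHomArea γ₁ γ₃ ≤ minHomArea γ₁ γ₂ + minHomArea γ₂ γ₃ := by
  unfold minHomArea
  rw [ENNReal.iInf_add]
  refine le_iInf fun H₁ => ?_
  rw [ENNReal.add_iInf]
  exact le_iInf fun H₂ => (iInf_le _ (H₁.trans H₂)).trans (homArea_trans_le H₁ H₂)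
end
end
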